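/- arXiv:1409.4219 — 3 statements merged into one kernel-verified Lean document; each statement's English description precedes it below -/
import Mathlib

section
/- Let F : C → D be a left exact functor between categories with finite limits and binary coproducts. Then F is coherent if and only if F preserves strong epimorphisms and the canonical comparison morphism F(X) + F(Y) → F(X + Y) is a strong epimorphism for all objects X, Y of C. -/
/-!
A cospan `(f, g)` is jointly strongly epimorphic exactly when `coprod.desc f g` is a strong
epimorphism, and a single `f` is a strong epimorphism exactly when `(f, f)` is jointly strongly
epimorphic. Every jointly strongly epimorphic cospan `(f, g)` factors as `(inl, inr)` followed by
`coprod.desc f g`; applying `F` gives `(F inl, F inr)`, jointly strongly epimorphic because the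
comparison morphism is a strong epimorphism, followed by the strong epimorphism
`F (coprod.desc f g)`, and jointly strongly epimorphic cospans are stable under such composites.
-/

open CategoryTheory CategoryTheory.Limits

universe w₂ w v u

namespace AlgCoh

variable {C : Type u} [Category.{v} C]

/-- A cospan `(f, g)` over `Z` is jointly strongly epimorphic: whenever both legs,
after postcomposition with `φ : Z ⟶ P`, factor through a monomorphism `m : M ⟶ P`,
there is a unique diagonal lift `l : Z ⟶ M` with `l ≫ m = φ`. -/
def JointlyStronglyEpi {X Y Z : C} (f : X ⟶ Z) (g : Y ⟶ Z) : Prop :=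
  ∀ ⦃M P : C⦄ (m : M ⟶ P), Mono m → ∀ (φ : Z ⟶ P) (f' : X ⟶ M) (g' : Y ⟶ M),
    f' ≫ m = f ≫ φ → g' ≫ m = g ≫ φ → ∃! l : Z ⟶ M, l ≫ m = φ

def PreservesJSEPairs {D : Type w} [Category.{w₂} D] (F : C ⥤ D) : Prop :=
  ∀ ⦃X Y Z : C⦄ (f : X ⟶ Z) (g : Y ⟶ Z),
    JointlyStronglyEpi f g → JointlyStronglyEpi (F.map f) (F.map g)

def CoherentFunctor {D : Type w} [Category.{w₂} D] (F : C ⥤ D) : Prop :=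
  Nonempty (PreservesFiniteLimits F) ∧ PreservesJSEPairs F

section JointlyStronglyEpi

variable {X Y Z : C} {f : X ⟶ Z} {g : Y ⟶ Z}

lemma jointlyStronglyEpi_of_lift
    (h : ∀ ⦃M P : C⦄ (m : M ⟶ P), Mono m → ∀ (φ : Z ⟶ P) (f' : X ⟶ M) (g' : Y ⟶ M),
      f' ≫ m = f ≫ φ → g' ≫ m = g ≫ φ → ∃ l : Z ⟶ M, l ≫ m = φ) :
    JointlyStronglyEpi f g := by
  intro M P m hm φ f' g' hf hg
  obtain ⟨l, hl⟩ := h m hm φ f' g' hf hg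
  exact ⟨l, hl, fun l' hl' => (cancel_mono m).mp (hl'.trans hl.symm)⟩

lemma JointlyStronglyEpi.eq_of_comp_eq [HasEqualizers C] (h : JointlyStronglyEpi f g)
    {P : C} {u v : Z ⟶ P} (hf : f ≫ u = f ≫ v) (hg : g ≫ u = g ≫ v) : u = v := by
  obtain ⟨l, hl, -⟩ := h (equalizer.ι u v) inferInstance (𝟙 Z)
    (equalizer.lift f hf) (equalizer.lift g hg) (by simp) (by simp)
  calc u = (l ≫ equalizer.ι u v) ≫ u := by rw [hl, Category.id_comp]
    _ = l ≫ equalizer.ι u v ≫ v := by rw [Category.assoc, equalizer.condition]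
    _ = v := by rw [← Category.assoc, hl, Category.id_comp]

lemma JointlyStronglyEpi.strongEpi_of_fac [HasEqualizers C] (h : JointlyStronglyEpi f g)
    {W : C} {a : X ⟶ W} {b : Y ⟶ W} {e : W ⟶ Z} (ha : a ≫ e = f) (hb : b ≫ e = g) :
    StrongEpi e := by
  have : Epi e := ⟨fun u v huv => h.eq_of_comp_eq
    (by rw [← ha, Category.assoc, huv, Category.assoc])
    (by rw [← hb, Category.assoc, huv, Category.assoc])⟩
  refine StrongEpi.mk' fun M P z hz u v sq => ?_
  obtain ⟨l, hl, -⟩ := h z hz v (a ≫ u) (b ≫ u)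
    (by rw [Category.assoc, sq.w, ← Category.assoc, ha])
    (by rw [Category.assoc, sq.w, ← Category.assoc, hb])
  exact CommSq.HasLift.mk' ⟨l, (cancel_mono z).mp (by rw [Category.assoc, hl, sq.w]), hl⟩

lemma JointlyStronglyEpi.of_fac_strongEpi {W : C} {a : X ⟶ W} {b : Y ⟶ W}
    (h : JointlyStronglyEpi a b) {e : W ⟶ Z} [StrongEpi e] (ha : a ≫ e = f) (hb : b ≫ e = g) :
    JointlyStronglyEpi f g := by
  refine jointlyStronglyEpi_of_lift fun M P m hm φ f' g' hf hg => ?_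
  obtain ⟨l, hl, -⟩ := h m hm (e ≫ φ) f' g'
    (by rw [hf, ← ha, Category.assoc]) (by rw [hg, ← hb, Category.assoc])
  have sq : CommSq l e m φ := ⟨hl⟩
  exact ⟨sq.lift, sq.fac_right⟩

end JointlyStronglyEpi

lemma jointlyStronglyEpi_id_id (X : C) : JointlyStronglyEpi (𝟙 X) (𝟙 X) :=
  jointlyStronglyEpi_of_lift fun _ _ _ _ _ f' _ hf _ => ⟨f', by rw [hf, Category.id_comp]⟩

lemma jointlyStronglyEpi_inl_inr [HasBinaryCoproducts C] (X Y : C) :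
    JointlyStronglyEpi (coprod.inl : X ⟶ X ⨿ Y) coprod.inr :=
  jointlyStronglyEpi_of_lift fun _ _ _ _ _ f' g' hf hg =>
    ⟨coprod.desc f' g', coprod.hom_ext (by rw [coprod.inl_desc_assoc, hf])
      (by rw [coprod.inr_desc_assoc, hg])⟩

lemma jointlyStronglyEpi_self_iff [HasEqualizers C] {X Z : C} (f : X ⟶ Z) :
    JointlyStronglyEpi f f ↔ StrongEpi f :=
  ⟨fun h => h.strongEpi_of_fac (Category.id_comp f) (Category.id_comp f),
    fun _ => (jointlyStronglyEpi_id_id X).of_fac_strongEpi (Category.id_comp f)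
      (Category.id_comp f)⟩

lemma jointlyStronglyEpi_iff_strongEpi_coprod_desc [HasEqualizers C] [HasBinaryCoproducts C]
    {X Y Z : C} (f : X ⟶ Z) (g : Y ⟶ Z) :
    JointlyStronglyEpi f g ↔ StrongEpi (coprod.desc f g) :=
  ⟨fun h => h.strongEpi_of_fac (coprod.inl_desc f g) (coprod.inr_desc f g),
    fun _ => (jointlyStronglyEpi_inl_inr X Y).of_fac_strongEpi (coprod.inl_desc f g)
      (coprod.inr_desc f g)⟩

/-- A left exact functor between finitely complete categories with binary
coproducts is coherent if and only if it preserves strong epimorphisms and all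
the canonical comparison morphisms `F X ⨿ F Y ⟶ F (X ⨿ Y)` are strong
epimorphisms. -/
theorem coherent_iff_preserves_strongEpi_and_comparison
    {D : Type w} [Category.{w₂} D]
    [HasFiniteLimits C] [HasBinaryCoproducts C]
    [HasFiniteLimits D] [HasBinaryCoproducts D]
    (F : C ⥤ D) [PreservesFiniteLimits F] :
    CoherentFunctor F ↔
      ((∀ {X Y : C} (f : X ⟶ Y), StrongEpi f → StrongEpi (F.map f)) ∧
        ∀ X Y : C,
          StrongEpi (coprod.desc (F.map (coprod.inl : X ⟶ X ⨿ Y))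
            (F.map (coprod.inr : Y ⟶ X ⨿ Y)))) := by
  constructor
  · rintro ⟨-, hF⟩
    refine ⟨fun f hf => ?_, fun X Y => ?_⟩
    · exact (jointlyStronglyEpi_self_iff _).mp (hF f f ((jointlyStronglyEpi_self_iff f).mpr hf))
    · exact (jointlyStronglyEpi_iff_strongEpi_coprod_desc _ _).mp
        (hF _ _ (jointlyStronglyEpi_inl_inr X Y))
  · rintro ⟨hStrongEpi, hComparison⟩
    refine ⟨⟨inferInstance⟩, fun X Y Z f g hfg => ?_⟩
    have : StrongEpi (F.map (coprod.desc f g)) :=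
      hStrongEpi _ ((jointlyStronglyEpi_iff_strongEpi_coprod_desc f g).mp hfg)
    have hInlInr : JointlyStronglyEpi (F.map (coprod.inl : X ⟶ X ⨿ Y)) (F.map coprod.inr) :=
      (jointlyStronglyEpi_iff_strongEpi_coprod_desc _ _).mpr (hComparison X Y)
    exact hInlInr.of_fac_strongEpi (e := F.map (coprod.desc f g))
      (by rw [← F.map_comp, coprod.inl_desc]) (by rw [← F.map_comp, coprod.inr_desc])

end AlgCoh
end

section
/- In a unital category, for every object X, the pullback functor along the diagonal ⟨1_X, 1_X⟩ : X → X × X, from the slice over X × X to the slice over X, is coherent only if X is a zero object. -/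
open CategoryTheory CategoryTheory.Limits

universe w₂ w v u

namespace AlgCoh

variable {C : Type u} [Category.{v} C]

/-
Pulling back along `δ = ⟨1_X, 1_X⟩` sends the unital cospan `(⟨1_X, 0⟩, ⟨0, 1_X⟩)`, viewed in
the slice over `X × X`, to a cospan whose domains lie over `X` by zero maps: `⟨1, 0⟩ ∘ a = δ ∘ b`
forces `b = 0`. Its codomain, the pullback of `1_{X × X}`, lies over `X` by an isomorphism. A
jointly strongly epimorphic cospan whose legs factor through the mono `0 → X` has its codomain
factoring through it too, so that isomorphism is zero and `X` is a zero object.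
-/

theorem Over.jointlyStronglyEpi_of_left {S : C} {A B T : Over S} (f : A ⟶ T) (g : B ⟶ T)
    (h : JointlyStronglyEpi f.left g.left) : JointlyStronglyEpi f g := by
  intro M P m _ φ f' g' hf hg
  obtain ⟨l, hl, hl_unique⟩ := h m.left inferInstance φ.left f'.left g'.left
    (congrArg CommaMorphism.left hf) (congrArg CommaMorphism.left hg)
  refine ⟨Over.homMk l ?_, Over.OverMorphism.ext hl, fun l' hl' => ?_⟩
  · rw [← Over.w m, ← Category.assoc, hl, Over.w φ]
  · exact Over.OverMorphism.ext (hl_unique l'.left (congrArg CommaMorphism.left hl'))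

theorem Over.hom_factors_of_jointlyStronglyEpi {X : C} {A B T : Over X} {f : A ⟶ T}
    {g : B ⟶ T} (hfg : JointlyStronglyEpi f g) {M : C} (m : M ⟶ X) [Mono m]
    (a : A.left ⟶ M) (b : B.left ⟶ M) (ha : a ≫ m = A.hom) (hb : b ≫ m = B.hom) :
    ∃ t : T.left ⟶ M, t ≫ m = T.hom := by
  obtain ⟨l, hl, -⟩ := hfg (Over.homMk m : Over.mk m ⟶ Over.mk (𝟙 X)) inferInstance
    (Over.homMk T.hom) (Over.homMk a ha) (Over.homMk b hb)
    (Over.OverMorphism.ext (by simpa using ha)) (Over.OverMorphism.ext (by simpa using hb))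
  exact ⟨l.left, by simpa using congrArg CommaMorphism.left hl⟩

theorem Over.hom_eq_zero_of_jointlyStronglyEpi [HasZeroObject C] [HasZeroMorphisms C]
    {X : C} {A B T : Over X} {f : A ⟶ T} {g : B ⟶ T} (hfg : JointlyStronglyEpi f g)
    (hA : A.hom = 0) (hB : B.hom = 0) : T.hom = 0 := by
  open ZeroObject in
  obtain ⟨t, ht⟩ := Over.hom_factors_of_jointlyStronglyEpi hfg (0 : (0 : C) ⟶ X) 0 0
    (by simp [hA]) (by simp [hB])
  simp [← ht]

theorem pullback_snd_diag_eq_fst_comp_fst {X Y : C} [HasBinaryProduct X X] (f : Y ⟶ X ⨯ X)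
    [HasPullback f (diag X)] :
    pullback.snd f (diag X) = pullback.fst f (diag X) ≫ f ≫ prod.fst := by
  rw [pullback.condition_assoc, prod.lift_fst, Category.comp_id]

theorem pullback_snd_diag_eq_fst_comp_snd {X Y : C} [HasBinaryProduct X X] (f : Y ⟶ X ⨯ X)
    [HasPullback f (diag X)] :
    pullback.snd f (diag X) = pullback.fst f (diag X) ≫ f ≫ prod.snd := by
  rw [pullback.condition_assoc, prod.lift_snd, Category.comp_id]

/-- In a unital category, the change-of-base functor along the diagonal
`⟨1_X, 1_X⟩ : X ⟶ X ⨯ X` of the basic fibration is coherent only if `X` is a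
zero object. -/
theorem isZero_of_coherent_pullback_diag
    [HasZeroObject C] [HasZeroMorphisms C] [HasFiniteLimits C]
    (hU : ∀ X Y : C,
      JointlyStronglyEpi (prod.lift (𝟙 X) (0 : X ⟶ Y)) (prod.lift (0 : Y ⟶ X) (𝟙 Y)))
    (X : C) (h : CoherentFunctor (Over.pullback (diag X))) :
    IsZero X := by
  let ι₁ : Over.mk (prod.lift (𝟙 X) (0 : X ⟶ X)) ⟶ Over.mk (𝟙 (X ⨯ X)) :=
    Over.homMk (prod.lift (𝟙 X) 0)
  let ι₂ : Over.mk (prod.lift (0 : X ⟶ X) (𝟙 X)) ⟶ Over.mk (𝟙 (X ⨯ X)) :=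
    Over.homMk (prod.lift 0 (𝟙 X))
  have hι : JointlyStronglyEpi ι₁ ι₂ := Over.jointlyStronglyEpi_of_left ι₁ ι₂ (hU X X)
  have hA : ((Over.pullback (diag X)).obj (Over.mk (prod.lift (𝟙 X) 0))).hom = 0 := by
    show pullback.snd (prod.lift (𝟙 X) 0) (diag X) = 0
    rw [pullback_snd_diag_eq_fst_comp_snd, prod.lift_snd, comp_zero]
  have hB : ((Over.pullback (diag X)).obj (Over.mk (prod.lift 0 (𝟙 X)))).hom = 0 := by
    show pullback.snd (prod.lift 0 (𝟙 X)) (diag X) = 0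
    rw [pullback_snd_diag_eq_fst_comp_fst, prod.lift_fst, comp_zero]
  have hzero : pullback.snd (𝟙 (X ⨯ X)) (diag X) = 0 :=
    Over.hom_eq_zero_of_jointlyStronglyEpi (h.2 ι₁ ι₂ hι) hA hB
  have : Epi (0 : pullback (𝟙 (X ⨯ X)) (diag X) ⟶ X) := hzero ▸ inferInstance
  exact IsZero.of_epi_zero (pullback (𝟙 (X ⨯ X)) (diag X)) X

end AlgCoh
end

section
/- Let C and D be pointed categories with finite limits such that normal closures of monomorphisms exist in C, and let F : C → D be a conservative finite-limit-preserving functor. If F preserves normal closures, then F reflects normal monomorphisms: if F(m) is a normal monomorphism, then m is a normal monomorphism. -/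
/-!
Being conservative and finite-limit preserving, `F` reflects pullbacks and hence monomorphisms,
so `m` is mono and has a normal closure `n` with `m = i ≫ n`. Since `F m` is normal it is its
own normal closure, and `F n` is the normal closure of `F m`, so `F i` is an isomorphism; by
conservativity so is `i`, and `m` inherits normality from `n`.
-/

open CategoryTheory CategoryTheory.Limits

universe w₂ w v u

namespace AlgCoh

variable {C : Type u} [Category.{v} C]

/-- `n : N ⟶ X` is the normal closure of `m : M ⟶ X`: it is the smallest normal
monomorphism into `X` through which `m` factors. -/
def IsNormalClosure [HasZeroMorphisms C] {M N X : C} (m : M ⟶ X) (n : N ⟶ X) : Prop :=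
  Mono n ∧ Nonempty (NormalMono n) ∧ (∃ i : M ⟶ N, i ≫ n = m) ∧
    ∀ ⦃N' : C⦄ (n' : N' ⟶ X), Mono n' → Nonempty (NormalMono n') →
      (∃ j : M ⟶ N', j ≫ n' = m) → ∃ k : N ⟶ N', k ≫ n' = n

theorem IsNormalClosure.isIso_of_normalMono [HasZeroMorphisms C] {M N X : C}
    {m : M ⟶ X} {n : N ⟶ X} (h : IsNormalClosure m n) (hm : Nonempty (NormalMono m))
    {i : M ⟶ N} (hi : i ≫ n = m) : IsIso i := by
  have : Mono m := hm.some.regularMono.mono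
  have : Mono n := h.1
  obtain ⟨k, hk⟩ := h.2.2.2 m inferInstance hm ⟨𝟙 M, Category.id_comp m⟩
  refine ⟨k, ?_, ?_⟩
  · rw [← cancel_mono m, Category.assoc, hk, hi, Category.id_comp]
  · rw [← cancel_mono n, Category.assoc, hi, hk, Category.id_comp]

theorem nonempty_normalMono_of_isIso_comp [HasZeroMorphisms C] {M N X : C}
    {m : M ⟶ X} {n : N ⟶ X} (hn : NormalMono n) (i : M ⟶ N) [IsIso i] (hi : i ≫ n = m) :
    Nonempty (NormalMono m) :=
  ⟨hn.ofArrowIso (Arrow.isoMk (asIso i).symm (Iso.refl X) (by simp [← hi]))⟩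

theorem reflects_normalMono_of_preserves_normal_closures_general
    {D : Type w} [Category.{w₂} D]
    [HasZeroMorphisms C] [HasZeroMorphisms D]
    [HasFiniteLimits C]
    (F : C ⥤ D) [F.ReflectsIsomorphisms] [PreservesFiniteLimits F]
    (hclos : ∀ {M X : C} (m : M ⟶ X), Mono m →
      ∃ (N : C) (n : N ⟶ X), IsNormalClosure m n)
    (hpres : ∀ {M N X : C} (m : M ⟶ X) (n : N ⟶ X), Mono m →
      IsNormalClosure m n → IsNormalClosure (F.map m) (F.map n))
    {M X : C} (m : M ⟶ X)
    (hFm : Nonempty (NormalMono (F.map m))) :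
    Nonempty (NormalMono m) := by
  have : Mono (F.map m) := hFm.some.regularMono.mono
  have hm : Mono m := F.mono_of_mono_map this
  obtain ⟨N, n, hn⟩ := hclos m hm
  obtain ⟨i, hi⟩ := hn.2.2.1
  have : IsIso (F.map i) :=
    (hpres m n hm hn).isIso_of_normalMono hFm (by rw [← F.map_comp, hi])
  have : IsIso i := isIso_of_reflects_iso i F
  exact nonempty_normalMono_of_isIso_comp hn.2.1.some i hi

/-- Let `C` and `D` be pointed finitely complete categories such that normal
closures of monomorphisms exist in `C`, and let `F : C ⥤ D` be a conservative
finite-limit-preserving functor preserving normal closures. Then `F` reflects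
normal monomorphisms. -/
theorem reflects_normalMono_of_preserves_normal_closures
    {D : Type w} [Category.{w₂} D]
    [HasZeroMorphisms C] [HasZeroMorphisms D]
    [HasFiniteLimits C] [HasFiniteLimits D]
    (F : C ⥤ D) [F.ReflectsIsomorphisms] [PreservesFiniteLimits F]
    (hclos : ∀ {M X : C} (m : M ⟶ X), Mono m →
      ∃ (N : C) (n : N ⟶ X), IsNormalClosure m n)
    (hpres : ∀ {M N X : C} (m : M ⟶ X) (n : N ⟶ X), Mono m →
      IsNormalClosure m n → IsNormalClosure (F.map m) (F.map n))
    {M X : C} (m : M ⟶ X)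
    (hFm : Nonempty (NormalMono (F.map m))) :
    Nonempty (NormalMono m) :=
  reflects_normalMono_of_preserves_normal_closures_general F hclos hpres m hFm

end AlgCoh
end
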